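/- Let φ : ℂ → ℂ be a Schwartz function on ℂ (viewed as a two-dimensional real normed vector space, in Mathlib's SchwartzMap sense). For m ∈ ℤ and x > 0 define the m-th Fourier coefficient φ_m(x) = (1/2π)∫_0^{2π} φ(x e^{iθ}) e^{−imθ} dθ. Then each φ_m is smooth on (0,∞), and for all α, β, A ∈ ℕ there exists C > 0 such that x^{α+β}·|φ_m^{(α)}(x)| ≤ C·(1 + |m|)^{−A} for all m ∈ ℤ and all x > 0. -/

import Mathlib

open scoped Real

/-- The `m`-th Fourier coefficient `φ_m(x) = (1/2π)∫_0^{2π} φ(x e^{iθ}) e^{−imθ} dθ`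
of a Schwartz function `φ` on `ℂ`. -/
noncomputable def fourierCoeffC (φ : SchwartzMap ℂ ℂ) (m : ℤ) (x : ℝ) : ℂ :=
  (1 / (2 * (π : ℂ))) * ∫ θ in (0 : ℝ)..(2 * π),
    φ ((x : ℂ) * Complex.exp ((θ : ℂ) * Complex.I)) *
      Complex.exp (-(m : ℂ) * (θ : ℂ) * Complex.I)

namespace Stmt8aux

open Complex SchwartzMap MeasureTheory intervalIntegral

noncomputable def u (x θ : ℝ) : ℂ := (x : ℂ) * Complex.exp ((θ : ℂ) * Complex.I)
noncomputable def em (m : ℤ) (θ : ℝ) : ℂ := Complex.exp (-(m : ℂ) * (θ : ℂ) * Complex.I)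

lemma fc_eq (φ : SchwartzMap ℂ ℂ) (m : ℤ) (x : ℝ) :
    fourierCoeffC φ m x = (1 / (2 * (π : ℂ))) * ∫ θ in (0:ℝ)..(2*π), φ (u x θ) * em m θ := rfl

lemma norm_em (m : ℤ) (θ : ℝ) : ‖em m θ‖ = 1 := by
  have : (-(m : ℂ) * (θ : ℂ) * Complex.I) = ((-(m * θ) : ℝ) : ℂ) * Complex.I := by
    push_cast; ring
  rw [em, this, Complex.norm_exp_ofReal_mul_I]

lemma norm_u (x θ : ℝ) : ‖u x θ‖ = |x| := by
  rw [u, norm_mul, Complex.norm_exp_ofReal_mul_I,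
    mul_one, Complex.norm_real, Real.norm_eq_abs]

lemma integrand_continuous (ψ : SchwartzMap ℂ ℂ) (m : ℤ) (x : ℝ) :
    Continuous (fun θ => ψ (u x θ) * em m θ) :=
  (ψ.continuous.comp (by unfold u; fun_prop)).mul (by unfold em; fun_prop)

/-- Basic uniform bound. -/
lemma fc_bound (ψ : SchwartzMap ℂ ℂ) (β : ℕ) :
    ∃ C : ℝ, 0 ≤ C ∧ ∀ (m : ℤ) (x : ℝ), 0 < x → x ^ β * ‖fourierCoeffC ψ m x‖ ≤ C := by
  obtain ⟨C, hC0, hC⟩ := ψ.decay β 0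
  refine ⟨C, hC0.le, ?_⟩
  intro m x hx
  have key : ∀ θ ∈ Set.uIoc (0:ℝ) (2*π), ‖ψ (u x θ) * em m θ‖ ≤ C / x ^ β := by
    intro θ _
    rw [norm_mul, norm_em, mul_one]
    have h := hC (u x θ)
    rw [norm_iteratedFDeriv_zero, norm_u, abs_of_pos hx] at h
    rw [le_div_iff₀ (by positivity : (0:ℝ) < x ^ β)]
    linarith
  have hii : ‖∫ θ in (0:ℝ)..(2*π), ψ (u x θ) * em m θ‖ ≤ C / x ^ β * |2*π - 0| :=
    intervalIntegral.norm_integral_le_of_norm_le_const key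
  rw [fc_eq, norm_mul]
  have h2π : (0:ℝ) < 2 * π := by positivity
  have hn : ‖(1 / (2 * (π:ℂ)))‖ = 1 / (2*π) := by
    simp [map_div₀, abs_of_pos Real.pi_pos]
  rw [hn]
  have habs : |2*π - 0| = 2*π := by rw [sub_zero, abs_of_pos h2π]
  rw [habs] at hii
  calc x ^ β * (1 / (2*π) * ‖∫ θ in (0:ℝ)..(2*π), ψ (u x θ) * em m θ‖)
      ≤ x ^ β * (1 / (2*π) * (C / x ^ β * (2*π))) := by gcongr
    _ = C := by field_simp

noncomputable def mulRe : SchwartzMap ℂ ℂ →L[ℝ] SchwartzMap ℂ ℂ :=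
  SchwartzMap.bilinLeftCLM ((ContinuousLinearMap.lsmul ℝ ℝ).flip)
    Complex.reCLM.hasTemperateGrowth

noncomputable def mulIm : SchwartzMap ℂ ℂ →L[ℝ] SchwartzMap ℂ ℂ :=
  SchwartzMap.bilinLeftCLM ((ContinuousLinearMap.lsmul ℝ ℝ).flip)
    Complex.imCLM.hasTemperateGrowth

lemma mulRe_apply (φ : SchwartzMap ℂ ℂ) (z : ℂ) : mulRe φ z = z.re • φ z := rfl
lemma mulIm_apply (φ : SchwartzMap ℂ ℂ) (z : ℂ) : mulIm φ z = z.im • φ z := rfl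

noncomputable def Mop (φ : SchwartzMap ℂ ℂ) : SchwartzMap ℂ ℂ :=
  mulRe (LineDeriv.lineDerivOpCLM ℝ (SchwartzMap ℂ ℂ) (1:ℂ) φ) + mulIm (LineDeriv.lineDerivOpCLM ℝ (SchwartzMap ℂ ℂ) Complex.I φ)

noncomputable def Lop (φ : SchwartzMap ℂ ℂ) : SchwartzMap ℂ ℂ :=
  mulRe (LineDeriv.lineDerivOpCLM ℝ (SchwartzMap ℂ ℂ) Complex.I φ) - mulIm (LineDeriv.lineDerivOpCLM ℝ (SchwartzMap ℂ ℂ) (1:ℂ) φ)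

lemma Mop_apply (φ : SchwartzMap ℂ ℂ) (z : ℂ) : Mop φ z = fderiv ℝ φ z z := by
  have h : z = z.re • (1:ℂ) + z.im • Complex.I := by
    simpa [Complex.real_smul] using (Complex.re_add_im z).symm
  have h2 : (fderiv ℝ φ z) z
      = (fderiv ℝ φ z) (z.re • (1:ℂ)) + (fderiv ℝ φ z) (z.im • Complex.I) := by
    rw [← map_add]; exact congrArg _ h
  rw [Mop]
  simp only [SchwartzMap.add_apply, mulRe_apply, mulIm_apply, LineDeriv.lineDerivOpCLM_apply,
    SchwartzMap.lineDerivOp_apply_eq_fderiv]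
  rw [h2, _root_.map_smul, _root_.map_smul]

lemma Lop_apply (φ : SchwartzMap ℂ ℂ) (z : ℂ) : Lop φ z = fderiv ℝ φ z (Complex.I * z) := by
  have h : Complex.I * z = z.re • Complex.I + (-z.im) • (1:ℂ) := by
    apply Complex.ext <;> simp
  have h2 : (fderiv ℝ φ z) (Complex.I * z)
      = (fderiv ℝ φ z) (z.re • Complex.I) + (fderiv ℝ φ z) ((-z.im) • (1:ℂ)) := by
    rw [← map_add]; exact congrArg _ h
  rw [Lop]
  simp only [SchwartzMap.sub_apply, mulRe_apply, mulIm_apply, LineDeriv.lineDerivOpCLM_apply,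
    SchwartzMap.lineDerivOp_apply_eq_fderiv]
  rw [h2, _root_.map_smul, _root_.map_smul]
  simp [sub_eq_add_neg, neg_smul]

lemma hasDerivAt_fc (ψ : SchwartzMap ℂ ℂ) (m : ℤ) {x : ℝ} (hx : x ≠ 0) :
    HasDerivAt (fourierCoeffC ψ m) (((x:ℂ))⁻¹ * fourierCoeffC (Mop ψ) m x) x := by
  obtain ⟨C, hC0, hC⟩ := ψ.decay 0 1
  have hfd : ∀ z : ℂ, ‖fderiv ℝ ψ z‖ ≤ C := by
    intro z
    have := hC z
    rwa [pow_zero, one_mul, ← norm_iteratedFDeriv_fderiv, norm_iteratedFDeriv_zero] at this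
  set F' : ℝ → ℝ → ℂ := fun y θ => (fderiv ℝ ψ (u y θ) (Complex.exp ((θ:ℂ) * Complex.I))) * em m θ with hF'
  have hderiv : ∀ (θ : ℝ) (y : ℝ), HasDerivAt (fun y : ℝ => ψ (u y θ) * em m θ) (F' y θ) y := by
    intro θ y
    have h1 : HasDerivAt (fun y : ℝ => u y θ) (Complex.exp ((θ:ℂ) * Complex.I)) y := by
      have := (Complex.ofRealCLM.hasDerivAt (x := y)).mul_const (Complex.exp ((θ:ℂ) * Complex.I))
      simpa [u] using this
    have h2 : HasDerivAt (fun y : ℝ => ψ (u y θ))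
        (fderiv ℝ ψ (u y θ) (Complex.exp ((θ:ℂ) * Complex.I))) y :=
      (ψ.differentiable.differentiableAt.hasFDerivAt).comp_hasDerivAt y h1
    exact h2.mul_const (em m θ)
  have key : HasDerivAt (fun y : ℝ => ∫ θ in (0:ℝ)..(2*π), ψ (u y θ) * em m θ)
      (∫ θ in (0:ℝ)..(2*π), F' x θ) x := by
    refine (intervalIntegral.hasDerivAt_integral_of_dominated_loc_of_deriv_le
      (F := fun y θ => ψ (u y θ) * em m θ) (F' := F') (bound := fun _ => C)
      (s := Set.univ) Filter.univ_mem ?_ ?_ ?_ ?_ ?_ ?_).2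
    · filter_upwards with y
      exact (integrand_continuous ψ m y).aestronglyMeasurable
    · exact (integrand_continuous ψ m x).intervalIntegrable _ _
    · apply Continuous.aestronglyMeasurable
      apply Continuous.mul ?_ (by unfold em; fun_prop)
      exact ((ψ.smooth ⊤).continuous_fderiv (by simp)).comp
        (by unfold u; fun_prop) |>.clm_apply (by fun_prop)
    · filter_upwards with θ _ y _
      rw [hF']
      calc ‖(fderiv ℝ ψ (u y θ)) (Complex.exp ((θ:ℂ) * Complex.I)) * em m θ‖
          ≤ ‖(fderiv ℝ ψ (u y θ))‖ * ‖Complex.exp ((θ:ℂ) * Complex.I)‖ * ‖em m θ‖ := by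
            rw [norm_mul]; gcongr; exact (fderiv ℝ ψ (u y θ)).le_opNorm _
        _ ≤ C := by
            have h1 : ‖Complex.exp ((θ:ℂ) * Complex.I)‖ = 1 := by
              rw [Complex.norm_exp_ofReal_mul_I]
            rw [h1, norm_em, mul_one, mul_one]
            exact hfd _
    · exact intervalIntegrable_const
    · filter_upwards with θ _ y _; exact hderiv θ y
  have hint : (∫ θ in (0:ℝ)..(2*π), F' x θ)
      = ((x:ℂ))⁻¹ * ∫ θ in (0:ℝ)..(2*π), (Mop ψ) (u x θ) * em m θ := by
    rw [← intervalIntegral.integral_const_mul]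
    apply intervalIntegral.integral_congr
    intro θ _
    show (fderiv ℝ ψ (u x θ)) (Complex.exp ((θ:ℂ) * Complex.I)) * em m θ
      = (x:ℂ)⁻¹ * ((Mop ψ) (u x θ) * em m θ)
    rw [Mop_apply]
    have : (fderiv ℝ ψ (u x θ)) (u x θ) = x • (fderiv ℝ ψ (u x θ)) (Complex.exp ((θ:ℂ) * Complex.I)) := by
      rw [← _root_.map_smul]
      congr 1
    rw [this, Complex.real_smul]
    have hxc : (x:ℂ) ≠ 0 := Complex.ofReal_ne_zero.mpr hx
    field_simp
  have := (key.const_mul (1 / (2 * (π : ℂ))))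
  rw [hint] at this
  have heq : (1 / (2 * (π:ℂ))) * ((x:ℂ)⁻¹ * ∫ θ in (0:ℝ)..(2*π), (Mop ψ) (u x θ) * em m θ)
      = ((x:ℂ))⁻¹ * fourierCoeffC (Mop ψ) m x := by
    rw [fc_eq]
    ring
  rw [heq] at this
  exact this

lemma fc_Lop (ψ : SchwartzMap ℂ ℂ) (m : ℤ) (x : ℝ) :
    fourierCoeffC (Lop ψ) m x = (m : ℂ) * Complex.I * fourierCoeffC ψ m x := by
  set G' : ℝ → ℂ := fun θ => (Lop ψ) (u x θ) * em m θ
    + ψ (u x θ) * ((-(m:ℂ)) * Complex.I * em m θ) with hG'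
  have hG : ∀ θ : ℝ, HasDerivAt (fun θ => ψ (u x θ) * em m θ) (G' θ) θ := by
    intro θ
    have h0 : HasDerivAt (fun θ : ℝ => (θ:ℂ)) 1 θ := by
      simpa using (hasDerivAt_id θ).ofReal_comp
    have hinner : HasDerivAt (fun θ : ℝ => (θ:ℂ) * Complex.I) Complex.I θ := by
      simpa using h0.mul_const Complex.I
    have h1 : HasDerivAt (fun θ : ℝ => u x θ) (Complex.I * u x θ) θ := by
      have := (hinner.cexp).const_mul (x : ℂ)
      have he : (x:ℂ) * (Complex.exp ((θ:ℂ) * Complex.I) * Complex.I)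
          = Complex.I * u x θ := by rw [u]; ring
      rw [he] at this
      exact this
    have h2 : HasDerivAt (fun θ : ℝ => ψ (u x θ)) ((Lop ψ) (u x θ)) θ := by
      rw [Lop_apply]
      exact (ψ.differentiable.differentiableAt.hasFDerivAt).comp_hasDerivAt θ h1
    have hinner3 : HasDerivAt (fun θ : ℝ => -(m:ℂ) * (θ:ℂ) * Complex.I)
        (-(m:ℂ) * Complex.I) θ := by
      simpa using (h0.const_mul (-(m:ℂ))).mul_const Complex.I
    have h3 : HasDerivAt (em m) (-(m:ℂ) * Complex.I * em m θ) θ := by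
      have hd := hinner3.cexp
      show HasDerivAt (fun θ : ℝ => Complex.exp (-(m:ℂ) * (θ:ℂ) * Complex.I)) _ θ
      convert hd using 1
      rw [em]; ring
    exact (h2.mul h3).congr_deriv (by simp only [hG'])
  have hcont1 : Continuous (fun θ => (Lop ψ) (u x θ) * em m θ) := integrand_continuous _ m x
  have hcont2 : Continuous (fun θ => ψ (u x θ) * ((-(m:ℂ)) * Complex.I * em m θ)) :=
    (ψ.continuous.comp (by unfold u; fun_prop)).mul (by unfold em; fun_prop)
  have hint : ∫ θ in (0:ℝ)..(2*π), G' θ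
      = (fun θ => ψ (u x θ) * em m θ) (2*π) - (fun θ => ψ (u x θ) * em m θ) 0 :=
    intervalIntegral.integral_eq_sub_of_hasDerivAt (fun θ _ => hG θ)
      ((hcont1.add hcont2).intervalIntegrable _ _)
  have hper : (fun θ => ψ (u x θ) * em m θ) (2*π) = (fun θ => ψ (u x θ) * em m θ) 0 := by
    have hu : u x (2*π) = u x 0 := by
      rw [u, u]
      congr 1
      rw [show (((2*π : ℝ)):ℂ) * Complex.I = 2 * (π:ℂ) * Complex.I by push_cast; ring,
        Complex.exp_two_pi_mul_I]
      norm_num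
    have hem : em m (2*π) = em m 0 := by
      rw [em, em]
      rw [show -(m:ℂ) * ((2*π : ℝ):ℂ) * Complex.I = ((-m : ℤ):ℂ) * (2 * (π:ℂ) * Complex.I) by
        push_cast; ring, Complex.exp_int_mul_two_pi_mul_I]
      norm_num
    simp only [hu, hem]
  rw [hper, sub_self] at hint
  have hsplit : ∫ θ in (0:ℝ)..(2*π), G' θ
      = (∫ θ in (0:ℝ)..(2*π), (Lop ψ) (u x θ) * em m θ)
        + (-(m:ℂ)) * Complex.I * ∫ θ in (0:ℝ)..(2*π), ψ (u x θ) * em m θ := by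
    rw [hG', intervalIntegral.integral_add (hcont1.intervalIntegrable _ _)
      (hcont2.intervalIntegrable _ _), ← intervalIntegral.integral_const_mul]
    congr 1
    apply intervalIntegral.integral_congr
    intro θ _
    ring
  rw [hint] at hsplit
  have hkey : (∫ θ in (0:ℝ)..(2*π), (Lop ψ) (u x θ) * em m θ)
      = (m:ℂ) * Complex.I * ∫ θ in (0:ℝ)..(2*π), ψ (u x θ) * em m θ := by
    linear_combination -hsplit
  rw [fc_eq, hkey, fc_eq]
  ring

lemma fc_sub_smul (ψ χ : SchwartzMap ℂ ℂ) (r : ℝ) (m : ℤ) (x : ℝ) :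
    fourierCoeffC (ψ - r • χ) m x
      = fourierCoeffC ψ m x - (r:ℂ) * fourierCoeffC χ m x := by
  rw [fc_eq, fc_eq, fc_eq]
  have hi : ∀ θ : ℝ, (ψ - r • χ) (u x θ) * em m θ
      = ψ (u x θ) * em m θ - (r:ℂ) * (χ (u x θ) * em m θ) := by
    intro θ
    rw [SchwartzMap.sub_apply, SchwartzMap.smul_apply]
    rw [Complex.real_smul]
    ring
  rw [intervalIntegral.integral_congr (g := fun θ =>
      ψ (u x θ) * em m θ - (r:ℂ) * (χ (u x θ) * em m θ)) (fun θ _ => hi θ)]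
  rw [intervalIntegral.integral_sub ((integrand_continuous ψ m x).intervalIntegrable _ _)
    ((by have h := integrand_continuous χ m x; exact continuous_const.mul h :
      Continuous fun θ => (r:ℂ) * (χ (u x θ) * em m θ)).intervalIntegrable _ _),
    intervalIntegral.integral_const_mul]
  ring

/-- the chain of Schwartz functions controlling iterated derivatives -/
noncomputable def Mchain (φ : SchwartzMap ℂ ℂ) : ℕ → SchwartzMap ℂ ℂ
  | 0 => φ
  | (k+1) => Mop (Mchain φ k) - (k:ℝ) • (Mchain φ k)

lemma iteratedDeriv_fc (φ : SchwartzMap ℂ ℂ) (m : ℤ) :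
    ∀ (k : ℕ) {x : ℝ}, 0 < x →
      iteratedDeriv k (fourierCoeffC φ m) x
        = ((x:ℂ))⁻¹ ^ k * fourierCoeffC (Mchain φ k) m x := by
  intro k
  induction k with
  | zero => intro x hx; simp [Mchain]
  | succ k ih =>
    intro x hx
    have hxc : (x:ℂ) ≠ 0 := Complex.ofReal_ne_zero.mpr hx.ne'
    rw [iteratedDeriv_succ]
    have hev : iteratedDeriv k (fourierCoeffC φ m)
        =ᶠ[nhds x] fun y : ℝ => ((y:ℂ))⁻¹ ^ k * fourierCoeffC (Mchain φ k) m y := by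
      filter_upwards [Ioi_mem_nhds hx] with y hy
      exact ih hy
    rw [hev.deriv_eq]
    have hc : HasDerivAt (fun y : ℝ => ((y:ℂ))⁻¹ ^ k)
        ((k:ℂ) * ((x:ℂ))⁻¹ ^ (k-1) * (-((x:ℂ)^2)⁻¹)) x := by
      have h1 : HasDerivAt (fun z : ℂ => z⁻¹ ^ k)
          ((k:ℂ) * ((x:ℂ))⁻¹ ^ (k-1) * (-((x:ℂ)^2)⁻¹)) ((x:ℝ):ℂ) :=
        (hasDerivAt_inv hxc).pow (n := k)
      exact h1.comp_ofReal
    have hF : HasDerivAt (fourierCoeffC (Mchain φ k) m)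
        (((x:ℂ))⁻¹ * fourierCoeffC (Mop (Mchain φ k)) m x) x :=
      hasDerivAt_fc _ m hx.ne'
    have := hc.mul hF
    rw [show (fun y : ℝ => ((y:ℂ))⁻¹ ^ k * fourierCoeffC (Mchain φ k) m y)
      = (fun y : ℝ => ((y:ℂ))⁻¹ ^ k) * fourierCoeffC (Mchain φ k) m from rfl, this.deriv]
    rw [show Mchain φ (k+1) = Mop (Mchain φ k) - (k:ℝ) • (Mchain φ k) from rfl,
      fc_sub_smul]
    push_cast
    set z := (x:ℂ)
    set FM := fourierCoeffC (Mop (Mchain φ k)) m x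
    set F := fourierCoeffC (Mchain φ k) m x
    cases k with
    | zero => simp
    | succ j =>
      have hj : (j + 1 : ℕ) - 1 = j := rfl
      rw [hj, pow_two, mul_inv]
      push_cast
      rw [pow_succ, pow_succ, pow_succ]
      ring

lemma contDiffOn_fc (m : ℤ) :
    ∀ (n : ℕ) (ψ : SchwartzMap ℂ ℂ),
      ContDiffOn ℝ (n : WithTop ℕ∞) (fourierCoeffC ψ m) (Set.Ioi 0) := by
  intro n
  induction n with
  | zero =>
    intro ψ
    rw [Nat.cast_zero, contDiffOn_zero]
    intro x hx
    exact ((hasDerivAt_fc ψ m (ne_of_gt hx)).continuousAt).continuousWithinAt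
  | succ n ih =>
    intro ψ
    rw [Nat.cast_add, Nat.cast_one]
    apply (contDiffOn_succ_iff_deriv_of_isOpen isOpen_Ioi).2
    refine ⟨?_, ?_, ?_⟩
    · intro x hx
      exact (hasDerivAt_fc ψ m (ne_of_gt hx)).differentiableAt.differentiableWithinAt
    · intro h
      exact absurd h (by simp)
    · apply ContDiffOn.congr (f := fun x : ℝ => ((x:ℂ))⁻¹ * fourierCoeffC (Mop ψ) m x)
      · apply ContDiffOn.mul
        · apply ContDiffOn.inv
          · exact (Complex.ofRealCLM.contDiff.of_le le_top).contDiffOn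
          · intro x hx
            exact Complex.ofReal_ne_zero.mpr (ne_of_gt hx)
        · exact ih (Mop ψ)
      · intro x hx
        exact (hasDerivAt_fc ψ m (ne_of_gt hx)).deriv
    
lemma fc_LopIter (ψ : SchwartzMap ℂ ℂ) (m : ℤ) (x : ℝ) (A : ℕ) :
    fourierCoeffC (Lop^[A] ψ) m x = ((m:ℂ) * Complex.I)^A * fourierCoeffC ψ m x := by
  induction A with
  | zero => simp
  | succ A ih =>
    rw [Function.iterate_succ_apply', fc_Lop, ih, pow_succ]
    ring

end Stmt8aux

/-- For `φ` Schwartz on `ℂ`, each Fourier coefficient `φ_m` is smooth on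
`(0,∞)`, and for all `α, β, A ∈ ℕ` there is `C > 0` with
`x^{α+β}|φ_m^{(α)}(x)| ≤ C (1+|m|)^{−A}` for all `m ∈ ℤ`, `x > 0`. -/
theorem stmt_8 (φ : SchwartzMap ℂ ℂ) :
    (∀ m : ℤ, ContDiffOn ℝ (⊤ : ℕ∞) (fourierCoeffC φ m) (Set.Ioi 0)) ∧
      ∀ (α β A : ℕ), ∃ C > 0, ∀ (m : ℤ) (x : ℝ), 0 < x →
        x ^ (α + β) * ‖iteratedDeriv α (fourierCoeffC φ m) x‖
          ≤ C * (1 + |(m : ℝ)|) ^ (-(A : ℝ)) := by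
  constructor
  · intro m
    exact contDiffOn_infty.2 (fun n => Stmt8aux.contDiffOn_fc m n φ)
  · intro α β A
    obtain ⟨C₀, hC₀0, hC₀⟩ := Stmt8aux.fc_bound (Stmt8aux.Mchain φ α) β
    obtain ⟨C₁, hC₁0, hC₁⟩ := Stmt8aux.fc_bound (Stmt8aux.Lop^[A] (Stmt8aux.Mchain φ α)) β
    refine ⟨2^A * max C₀ C₁ + 1, by positivity, ?_⟩
    intro m x hx
    have hxc : ((x:ℂ)) ≠ 0 := Complex.ofReal_ne_zero.mpr hx.ne'
    have hmax0 : (0:ℝ) ≤ max C₀ C₁ := le_trans hC₀0 (le_max_left _ _)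
    have h2A : (1:ℝ) ≤ 2^A := one_le_pow₀ (by norm_num)
    rw [Stmt8aux.iteratedDeriv_fc φ m α hx, norm_mul, norm_pow,
      norm_inv, Complex.norm_real, Real.norm_eq_abs, abs_of_pos hx]
    have hL : x ^ (α+β) * ((x⁻¹)^α * ‖fourierCoeffC (Stmt8aux.Mchain φ α) m x‖)
        = x ^ β * ‖fourierCoeffC (Stmt8aux.Mchain φ α) m x‖ := by
      rw [pow_add]
      field_simp
      ring_nf
      rw [← mul_pow, mul_inv_cancel₀ hx.ne', one_pow, one_mul]
    rw [hL]
    set ψ := Stmt8aux.Mchain φ α with hψdef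
    have hrpow : (1 + |(m:ℝ)|) ^ (-(A : ℝ)) = ((1 + |(m:ℝ)|)^A)⁻¹ := by
      rw [Real.rpow_neg (by positivity), Real.rpow_natCast]
    rw [hrpow]
    rcases eq_or_ne m 0 with hm | hm
    · subst hm
      simp only [Int.cast_zero, abs_zero, add_zero, one_pow, inv_one, mul_one]
      have h0 := hC₀ 0 x hx
      have h1 := le_max_left C₀ C₁
      have h2 := mul_le_mul_of_nonneg_right h2A hmax0
      linarith
    · have h1m : (1:ℝ) ≤ |(m:ℝ)| := by
        rw [show |(m:ℝ)| = ((|m| : ℤ) : ℝ) by push_cast; ring]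
        exact_mod_cast Int.one_le_abs hm
      have hmIA : ‖((m:ℂ) * Complex.I)^A‖ = |(m:ℝ)|^A := by
        rw [norm_pow, norm_mul, Complex.norm_I, mul_one]
        congr 1
        rw [show ((m:ℤ):ℂ) = (((m:ℤ):ℝ):ℂ) by push_cast; ring, Complex.norm_real,
          Real.norm_eq_abs]
      have hnorm : ‖fourierCoeffC (Stmt8aux.Lop^[A] ψ) m x‖ = |(m:ℝ)|^A * ‖fourierCoeffC ψ m x‖ := by
        rw [Stmt8aux.fc_LopIter ψ m x A, norm_mul, hmIA]
      have hmA : (0:ℝ) < |(m:ℝ)|^A := by positivity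
      have hstep : x ^ β * ‖fourierCoeffC ψ m x‖ ≤ C₁ * (|(m:ℝ)|^A)⁻¹ := by
        have h := hC₁ m x hx
        rw [hnorm] at h
        rw [← mul_le_mul_iff_of_pos_right hmA]
        calc x ^ β * ‖fourierCoeffC ψ m x‖ * |(m:ℝ)|^A
            = x ^ β * (|(m:ℝ)|^A * ‖fourierCoeffC ψ m x‖) := by ring
          _ ≤ C₁ := h
          _ = C₁ * (|(m:ℝ)|^A)⁻¹ * |(m:ℝ)|^A := by field_simp
      have hinv : (|(m:ℝ)|^A)⁻¹ ≤ 2^A * ((1 + |(m:ℝ)|)^A)⁻¹ := by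
        have hle : (1 + |(m:ℝ)|)^A ≤ 2^A * |(m:ℝ)|^A := by
          rw [← mul_pow]
          exact pow_le_pow_left₀ (by positivity) (by linarith) A
        rw [← div_eq_mul_inv, le_div_iff₀ (by positivity), inv_mul_eq_div,
          div_le_iff₀ hmA]
        linarith
      calc x ^ β * ‖fourierCoeffC ψ m x‖ ≤ C₁ * (|(m:ℝ)|^A)⁻¹ := hstep
        _ ≤ C₁ * (2^A * ((1 + |(m:ℝ)|)^A)⁻¹) := by
            apply mul_le_mul_of_nonneg_left hinv hC₁0
        _ ≤ (2^A * max C₀ C₁ + 1) * ((1 + |(m:ℝ)|)^A)⁻¹ := by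
            have hC₁max : C₁ ≤ max C₀ C₁ := le_max_right _ _
            have hpos : (0:ℝ) ≤ ((1 + |(m:ℝ)|)^A)⁻¹ := by positivity
            have h2Apos : (0:ℝ) ≤ 2^A := by positivity
            have hkey := mul_le_mul_of_nonneg_right
              (mul_le_mul_of_nonneg_left hC₁max h2Apos) hpos
            nlinarith
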